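/- Suppose the iterates of the CMRG ADMM satisfy λ₁^{k+1} = λ₁^k + τσ(Z^{k+1} + XW^{k+1} + G^{k+1} − Y) and λ₂^{k+1} = λ₂^k + τσ(Υ^{k+1} − CW^{k+1}), and that W^{k+1} = (XᵀX + CᵀC)^{-1}(Xᵀ(Y − Z^{k+1} − G^{k+1}) + CᵀΥ^{k+1}). If Xᵀλ₁^k − Cᵀλ₂^k = 0, then Xᵀλ₁^{k+1} − Cᵀλ₂^{k+1} = 0. -/
import Mathlib


open Matrix

/-- The multiplier invariant `Xᵀλ₁ − Cᵀλ₂ = 0` is preserved by the CMRG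
multiplier updates together with the closed-form `W`-update. -/
theorem stmt_11 (n d d' p : ℕ) (X : Matrix (Fin n) (Fin d) ℝ)
    (C : Matrix (Fin d') (Fin d) ℝ)
    (Y Z G : Matrix (Fin n) (Fin p) ℝ) (Υ : Matrix (Fin d') (Fin p) ℝ)
    (lam1 lam1' : Matrix (Fin n) (Fin p) ℝ) (lam2 lam2' : Matrix (Fin d') (Fin p) ℝ)
    (W : Matrix (Fin d) (Fin p) ℝ) (τ σ : ℝ) (hτ : 0 < τ) (hσ : 0 < σ)
    (hA : IsUnit (Xᵀ * X + Cᵀ * C))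
    (hW : W = (Xᵀ * X + Cᵀ * C)⁻¹ * (Xᵀ * (Y - Z - G) + Cᵀ * Υ))
    (h1 : lam1' = lam1 + (τ * σ) • (Z + X * W + G - Y))
    (h2 : lam2' = lam2 + (τ * σ) • (Υ - C * W))
    (hinv : Xᵀ * lam1 - Cᵀ * lam2 = 0) :
    Xᵀ * lam1' - Cᵀ * lam2' = 0 := by
  have hdet : IsUnit (Xᵀ * X + Cᵀ * C).det :=
    (Matrix.isUnit_iff_isUnit_det _).mp hA
  have hkey : (Xᵀ * X + Cᵀ * C) * W = Xᵀ * (Y - Z - G) + Cᵀ * Υ := by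
    rw [hW, Matrix.mul_nonsing_inv_cancel_left _ _ hdet]
  have hzero : Xᵀ * (Z + X * W + G - Y) - Cᵀ * (Υ - C * W) = 0 := by
    have h := hkey
    simp only [Matrix.add_mul, Matrix.mul_sub, Matrix.mul_add, Matrix.mul_assoc] at h ⊢
    rw [sub_eq_zero]
    linear_combination (norm := abel) h
  calc Xᵀ * lam1' - Cᵀ * lam2'
      = (Xᵀ * lam1 - Cᵀ * lam2)
        + (τ * σ) • (Xᵀ * (Z + X * W + G - Y) - Cᵀ * (Υ - C * W)) := by
        rw [h1, h2]
        simp only [Matrix.mul_add, Matrix.mul_sub, Matrix.mul_smul, smul_add, smul_sub, smul_neg, Matrix.mul_neg]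
        abel
    _ = 0 := by rw [hinv, hzero, smul_zero, add_zero]
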